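/- (Equality case for the Rényi–Shannon inequality, α ∈ (0,1)) For α ∈ (0,1) and b > n(1/α - 1), the function φ₁(x) = C₁(1+|x|^b)^{1/(α-1)} (with C₁ normalizing ∫ φ₁ = 1) satisfies the Rényi–Shannon inequality with equality: (1-α)⁻¹ log ∫ φ₁^α = (n/b) log ( A^{b/n} ∫ |x|^b φ₁ dx ), with A as in the sharp Rényi–Shannon inequality. -/

import Mathlib

/-!
In polar coordinates every integral in the statement is a moment
`M(s, p) = ∫ ‖x‖ ^ s (1 + ‖x‖ ^ b) ^ (-p) dx = |𝕊ⁿ⁻¹| B((n + s)/b, p - (n + s)/b) / b`,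
obtained from Euler's Beta integral by the substitutions `t = r ^ b` and `t = x / (1 - x)`.
With `p = 1/(1 - α)` and `c = n/b`, the constant `C₁` is `M(0, p)⁻¹`,
`φ₁ ^ α = C₁ ^ α (1 + ‖x‖ ^ b) ^ (1 - p)`, and the recursions
`B(u, v + 1) = B(u, v) v/(u + v)` and `B(u + 1, v) = B(u, v) u/(u + v)` give
`∫ φ₁ ^ α = C₁ ^ (α - 1) (p - 1)/(p - 1 - c)` and `∫ ‖x‖ ^ b φ₁ = c/(p - 1 - c)`.
Both sides of the identity are then `p log((p - 1)/(p - 1 - c)) - log C₁`.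
-/

open MeasureTheory Real Set ProbabilityTheory

theorem integral_rpow_mul_one_sub_rpow {u v : ℝ} (hu : 0 < u) (hv : 0 < v) :
    ∫ x in (0 : ℝ)..1, x ^ (u - 1) * (1 - x) ^ (v - 1) = beta u v := by
  have hcast : Complex.betaIntegral u v
      = ((∫ x in (0 : ℝ)..1, x ^ (u - 1) * (1 - x) ^ (v - 1) : ℝ) : ℂ) := by
    rw [Complex.betaIntegral, ← intervalIntegral.integral_ofReal]
    refine intervalIntegral.integral_congr fun x hx => ?_
    rw [uIcc_of_le zero_le_one] at hx
    push_cast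
    rw [Complex.ofReal_cpow hx.1, Complex.ofReal_cpow (sub_nonneg.2 hx.2)]
    push_cast
    ring
  rw [beta_eq_betaIntegralReal u v hu hv, hcast, Complex.ofReal_re]

theorem beta_add_one_left {u v : ℝ} (hu : u ≠ 0) (huv : u + v ≠ 0) :
    beta (u + 1) v = beta u v * (u / (u + v)) := by
  rw [beta, beta, add_right_comm, Gamma_add_one hu, Gamma_add_one huv]
  field_simp

theorem beta_add_one_right {u v : ℝ} (hv : v ≠ 0) (huv : u + v ≠ 0) :
    beta u (v + 1) = beta u v * (v / (u + v)) := by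
  rw [beta, beta, ← add_assoc, Gamma_add_one hv, Gamma_add_one huv]
  field_simp

theorem image_div_one_sub_Ioo : (fun x : ℝ => x / (1 - x)) '' Ioo 0 1 = Ioi 0 := by
  ext t
  simp only [mem_image, mem_Ioo, mem_Ioi]
  constructor
  · rintro ⟨x, ⟨hx0, hx1⟩, rfl⟩
    exact div_pos hx0 (by linarith)
  · intro ht
    refine ⟨t / (1 + t), ⟨by positivity, (div_lt_one (by positivity)).2 (by linarith)⟩, ?_⟩
    field_simp
    ring

theorem injOn_div_one_sub_Ioo : InjOn (fun x : ℝ => x / (1 - x)) (Ioo 0 1) := by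
  intro x hx y hy h
  rw [div_eq_div_iff (by linarith [hx.2]) (by linarith [hy.2])] at h
  linear_combination h

theorem integral_Ioi_rpow_mul_one_add_rpow {u v : ℝ} (hu : 0 < u) (hv : 0 < v) :
    ∫ t in Ioi 0, t ^ (u - 1) * (1 + t) ^ (-(u + v)) = beta u v := by
  have hderiv : ∀ x ∈ Ioo (0 : ℝ) 1,
      HasDerivWithinAt (fun x : ℝ => x / (1 - x)) ((1 - x) ^ (-2 : ℝ)) (Ioo 0 1) x := by
    intro x hx
    have h1x : 0 < 1 - x := by linarith [hx.2]
    refine (((hasDerivAt_id x).div ((hasDerivAt_id x).const_sub 1) h1x.ne').congr_deriv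
      ?_).hasDerivWithinAt
    rw [rpow_neg h1x.le, rpow_two, id]
    field_simp
    ring
  rw [← image_div_one_sub_Ioo, integral_image_eq_integral_abs_deriv_smul measurableSet_Ioo hderiv
    injOn_div_one_sub_Ioo, ← integral_rpow_mul_one_sub_rpow hu hv,
    intervalIntegral.integral_of_le zero_le_one, integral_Ioc_eq_integral_Ioo]
  refine setIntegral_congr_fun measurableSet_Ioo fun x hx => ?_
  have hx0 : 0 < x := hx.1
  have h1x : 0 < 1 - x := by linarith [hx.2]
  have hsum : 1 + x / (1 - x) = (1 - x)⁻¹ := by field_simp; ring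
  rw [smul_eq_mul, abs_of_pos (rpow_pos_of_pos h1x _), hsum, div_rpow hx0.le h1x.le,
    inv_rpow h1x.le, ← rpow_neg h1x.le, div_eq_mul_inv, ← rpow_neg h1x.le]
  calc (1 - x) ^ (-2 : ℝ) * (x ^ (u - 1) * (1 - x) ^ (-(u - 1)) * (1 - x) ^ (-(-(u + v))))
      = x ^ (u - 1) * ((1 - x) ^ (-2 : ℝ) * (1 - x) ^ (-(u - 1)) * (1 - x) ^ (-(-(u + v)))) := by
        ring
    _ = x ^ (u - 1) * (1 - x) ^ (v - 1) := by
        rw [← rpow_add h1x, ← rpow_add h1x]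
        ring_nf

theorem integral_Ioi_rpow_mul_one_add_rpow_rpow {s b p : ℝ} (hs : 0 < s) (hb : 0 < b)
    (hsp : s / b < p) :
    ∫ y in Ioi 0, y ^ (s - 1) * (1 + y ^ b) ^ (-p) = beta (s / b) (p - s / b) / b := by
  have hsubst : ∀ y ∈ Ioi (0 : ℝ), (b * y ^ (b - 1)) • ((y ^ b) ^ (s / b - 1) * (1 + y ^ b) ^ (-p))
      = b * (y ^ (s - 1) * (1 + y ^ b) ^ (-p)) := by
    intro y (hy : 0 < y)
    rw [smul_eq_mul, ← rpow_mul hy.le, mul_sub, mul_div_cancel₀ _ hb.ne', mul_one, ← mul_assoc,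
      mul_assoc b, ← rpow_add hy]
    ring_nf
  have hbeta := integral_Ioi_rpow_mul_one_add_rpow (div_pos hs hb) (sub_pos.2 hsp)
  rw [add_sub_cancel] at hbeta
  have hchange := integral_comp_rpow_Ioi_of_pos
    (g := fun t : ℝ => t ^ (s / b - 1) * (1 + t) ^ (-p)) hb
  rw [setIntegral_congr_fun measurableSet_Ioi hsubst, integral_const_mul, hbeta] at hchange
  rw [eq_div_iff hb.ne', mul_comm, hchange]

noncomputable def sphereArea (n : ℕ) : ℝ := 2 * π ^ ((n : ℝ) / 2) / Gamma ((n : ℝ) / 2)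

theorem sphereArea_eq_mul_volume_ball {n : ℕ} (hn : n ≠ 0) :
    sphereArea n = n * (√π ^ n / Gamma (n / 2 + 1)) := by
  have hn' : (0 : ℝ) < n / 2 := by positivity
  rw [sphereArea, Gamma_add_one hn'.ne', sqrt_eq_rpow, ← rpow_natCast, ← rpow_mul pi_pos.le]
  field_simp

theorem sphereArea_pos {n : ℕ} (hn : n ≠ 0) : 0 < sphereArea n := by
  rw [sphereArea_eq_mul_volume_ball hn]
  have : 0 < Gamma ((n : ℝ) / 2 + 1) := Gamma_pos_of_pos (by positivity)
  positivity

/-- `radialMoment n b s p` is `∫ ‖x‖ ^ s * (1 + ‖x‖ ^ b) ^ (-p)` over an `n`-dimensional space. -/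
noncomputable def radialMoment (n : ℕ) (b s p : ℝ) : ℝ :=
  sphereArea n * beta ((n + s) / b) (p - (n + s) / b) / b

theorem radialMoment_pos {n : ℕ} {b s p : ℝ} (hn : n ≠ 0) (hb : 0 < b) (hs : 0 < n + s)
    (hsp : (n + s) / b < p) : 0 < radialMoment n b s p :=
  div_pos (mul_pos (sphereArea_pos hn) (beta_pos (div_pos hs hb) (sub_pos.2 hsp))) hb

theorem inv_radialMoment_zero (n : ℕ) (b p : ℝ) :
    (radialMoment n b 0 p)⁻¹
      = b / sphereArea n * (Gamma p / (Gamma (p - n / b) * Gamma (n / b))) := by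
  rw [radialMoment, add_zero, beta, add_sub_cancel]
  simp only [div_eq_mul_inv, mul_inv, inv_inv]
  ring

theorem radialMoment_zero_sub_one {n : ℕ} {b p : ℝ} (hp : p ≠ 1) (hw : p - 1 - n / b ≠ 0) :
    radialMoment n b 0 (p - 1) = (p - 1) / (p - 1 - n / b) * radialMoment n b 0 p := by
  have hrec := beta_add_one_right hw (by rwa [add_sub_cancel, sub_ne_zero])
  rw [add_sub_cancel, show p - 1 - n / b + 1 = p - n / b by ring] at hrec
  rw [radialMoment, radialMoment, add_zero, hrec]
  field_simp

theorem radialMoment_self {n : ℕ} {b p : ℝ} (hb : b ≠ 0) (hn : n ≠ 0) (hp : p ≠ 1)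
    (hw : p - 1 - n / b ≠ 0) :
    radialMoment n b b p = n / b / (p - 1 - n / b) * radialMoment n b 0 p := by
  have hc : (n : ℝ) / b ≠ 0 := div_ne_zero (by exact_mod_cast hn) hb
  have hsum : (n : ℝ) / b + (p - 1 - n / b) ≠ 0 := by rwa [add_sub_cancel, sub_ne_zero]
  have hleft := beta_add_one_left hc hsum
  have hright := beta_add_one_right hw hsum
  rw [show p - 1 - n / b + 1 = p - n / b by ring] at hright
  rw [radialMoment, radialMoment, add_zero, add_div, div_self hb, sub_add_eq_sub_sub_swap,
    hleft, hright]
  -- an atom for `field_simp`, which cannot see that `b * (p - 1) - n ≠ 0`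
  set w := p - 1 - n / b
  field_simp

section InnerProductSpace

variable {E : Type*} [NormedAddCommGroup E] [InnerProductSpace ℝ E] [FiniteDimensional ℝ E]
  [MeasurableSpace E] [BorelSpace E] [Nontrivial E]

theorem integral_fun_norm_eq_sphereArea_mul (f : ℝ → ℝ) :
    ∫ x : E, f ‖x‖ = sphereArea (Module.finrank ℝ E)
      * ∫ y in Ioi (0 : ℝ), y ^ ((Module.finrank ℝ E : ℝ) - 1) * f y := by
  have hdim : 1 ≤ Module.finrank ℝ E := Module.finrank_pos
  have hrpow : ∀ y : ℝ, y ^ (Module.finrank ℝ E - 1) = y ^ ((Module.finrank ℝ E : ℝ) - 1) :=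
    fun y => by rw [← rpow_natCast, Nat.cast_sub hdim, Nat.cast_one]
  rw [integral_fun_norm_addHaar, measureReal_def, InnerProductSpace.volume_ball,
    ENNReal.toReal_mul, ENNReal.toReal_ofReal (by positivity)]
  simp only [ENNReal.ofReal_one, one_pow, ENNReal.toReal_one, one_mul, nsmul_eq_mul, smul_eq_mul,
    hrpow]
  rw [← mul_assoc, sphereArea_eq_mul_volume_ball (by omega)]

theorem integral_norm_rpow_mul_one_add_norm_rpow_rpow {s b p : ℝ}
    (hs : 0 < Module.finrank ℝ E + s) (hb : 0 < b) (hsp : (Module.finrank ℝ E + s) / b < p) :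
    ∫ x : E, ‖x‖ ^ s * (1 + ‖x‖ ^ b) ^ (-p) = radialMoment (Module.finrank ℝ E) b s p := by
  rw [integral_fun_norm_eq_sphereArea_mul (fun r => r ^ s * (1 + r ^ b) ^ (-p)), radialMoment,
    mul_div_assoc, ← integral_Ioi_rpow_mul_one_add_rpow_rpow hs hb hsp]
  congr 1
  refine setIntegral_congr_fun measurableSet_Ioi fun y (hy : 0 < y) => ?_
  rw [← mul_assoc, ← rpow_add hy, sub_add_eq_add_sub]

theorem integral_mul_one_add_norm_rpow_rpow_rpow {b p α C : ℝ} (hb : 0 < b)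
    (hp : Module.finrank ℝ E / b < α * p) (hC : 0 ≤ C) :
    ∫ x : E, (C * (1 + ‖x‖ ^ b) ^ (-p)) ^ α
      = C ^ α * radialMoment (Module.finrank ℝ E) b 0 (α * p) := by
  have hpos := integral_norm_rpow_mul_one_add_norm_rpow_rpow (E := E) (s := 0)
    (by rw [add_zero]; exact_mod_cast Module.finrank_pos) hb (by rwa [add_zero])
  simp only [rpow_zero, one_mul] at hpos
  rw [← hpos, ← integral_const_mul]
  congr 1 with x
  rw [mul_rpow hC (by positivity), ← rpow_mul (by positivity), neg_mul, mul_comm p]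

theorem integral_norm_rpow_mul_mul_one_add_norm_rpow_rpow {b p C : ℝ} (hb : 0 < b)
    (hp : (Module.finrank ℝ E + b) / b < p) :
    ∫ x : E, ‖x‖ ^ b * (C * (1 + ‖x‖ ^ b) ^ (-p))
      = C * radialMoment (Module.finrank ℝ E) b b p := by
  rw [← integral_norm_rpow_mul_one_add_norm_rpow_rpow (by positivity) hb hp, ← integral_const_mul]
  congr 1 with x
  ring

theorem integral_rpow_of_normalized {b p α C : ℝ} (hb : 0 < b)
    (hw : Module.finrank ℝ E / b < p - 1) (hαp : α * p = p - 1)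
    (hC : C = (radialMoment (Module.finrank ℝ E) b 0 p)⁻¹) :
    ∫ x : E, (C * (1 + ‖x‖ ^ b) ^ (-p)) ^ α
      = C ^ (α - 1) * ((p - 1) / (p - 1 - Module.finrank ℝ E / b)) := by
  have hd : 0 < Module.finrank ℝ E := Module.finrank_pos
  have hc : (0 : ℝ) < Module.finrank ℝ E / b := by positivity
  have hM := radialMoment_pos (s := 0) (p := p) hd.ne' hb (by rw [add_zero]; exact_mod_cast hd)
    (by rw [add_zero]; linarith)
  have hCpos : 0 < C := hC ▸ inv_pos.2 hM
  rw [integral_mul_one_add_norm_rpow_rpow_rpow hb (by rwa [hαp]) hCpos.le, hαp,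
    radialMoment_zero_sub_one (by linarith) (by linarith),
    rpow_sub_one hCpos.ne', hC]
  field_simp

theorem integral_norm_rpow_mul_of_normalized {b p C : ℝ} (hb : 0 < b)
    (hw : Module.finrank ℝ E / b < p - 1) (hC : C = (radialMoment (Module.finrank ℝ E) b 0 p)⁻¹) :
    ∫ x : E, ‖x‖ ^ b * (C * (1 + ‖x‖ ^ b) ^ (-p))
      = Module.finrank ℝ E / b / (p - 1 - Module.finrank ℝ E / b) := by
  have hd : 0 < Module.finrank ℝ E := Module.finrank_pos
  have hc : (0 : ℝ) < Module.finrank ℝ E / b := by positivity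
  have hM := radialMoment_pos (s := 0) (p := p) hd.ne' hb (by rw [add_zero]; exact_mod_cast hd)
    (by rw [add_zero]; linarith)
  rw [integral_norm_rpow_mul_mul_one_add_norm_rpow_rpow hb
      (by rw [add_div, div_self hb.ne']; linarith),
    radialMoment_self hb.ne' hd.ne' (by linarith) (by linarith), hC]
  field_simp

end InnerProductSpace

theorem mul_log_rpow_neg_inv_mul_eq {p c C X Y : ℝ} (hp : p ≠ 0) (hc : c ≠ 0) (hC : 0 < C)
    (hX : 0 < X) (hY : 0 < Y) :
    p * log (C ^ (-p⁻¹) * X) = c * log ((C⁻¹ * X ^ p * Y ^ c) ^ c⁻¹ * Y⁻¹) := by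
  rw [log_mul (by positivity) hX.ne', log_rpow hC, log_mul (by positivity) (by positivity),
    log_rpow (by positivity), log_mul (by positivity) (by positivity),
    log_mul (by positivity) (by positivity), log_inv, log_inv, log_rpow hX, log_rpow hY]
  field_simp
  ring

/-- Equality case of the Rényi–Shannon inequality for `α ∈ (0,1)`:
the extremal profile `φ₁` attains equality. -/
theorem renyi_shannon_equality_phi_one (n : ℕ) (hn : 1 ≤ n) (α b : ℝ)
    (hα : α ∈ Set.Ioo (0 : ℝ) 1) (hb : (n : ℝ) * (1 / α - 1) < b)
    (C₁ A : ℝ)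
    (hC₁ : C₁ = b / (2 * Real.pi ^ ((n : ℝ) / 2) / Real.Gamma ((n : ℝ) / 2)) *
      (Real.Gamma (1 / (1 - α)) /
        (Real.Gamma (1 / (1 - α) - (n : ℝ) / b) * Real.Gamma ((n : ℝ) / b))))
    (hA : A = C₁⁻¹ * (α * b / (α * b - (n : ℝ) * (1 - α))) ^ (1 / (1 - α)) *
      ((α * b - (n : ℝ) * (1 - α)) / ((n : ℝ) * (1 - α))) ^ ((n : ℝ) / b))
    (φ₁ : EuclideanSpace ℝ (Fin n) → ℝ)
    (hφ₁ : φ₁ = fun x => C₁ * (1 + ‖x‖ ^ b) ^ (1 / (α - 1))) :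
    (1 - α)⁻¹ * Real.log (∫ x, φ₁ x ^ α) =
      ((n : ℝ) / b) * Real.log (A ^ (b / (n : ℝ)) * ∫ x, ‖x‖ ^ b * φ₁ x) := by
  obtain ⟨hα0, hα1⟩ := hα
  have hn0 : (0 : ℝ) < n := by exact_mod_cast hn
  have hb0 : 0 < b := (mul_nonneg hn0.le (sub_nonneg.2 (one_le_one_div hα0 hα1.le))).trans_lt hb
  have : Nonempty (Fin n) := ⟨⟨0, hn⟩⟩
  set c := (n : ℝ) / b with hc_def
  set p := 1 / (1 - α) with hp_def
  have hc : 0 < c := div_pos hn0 hb0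
  have hαp : α * p = p - 1 := by rw [hp_def]; field_simp; ring
  have hw : c < p - 1 := by
    have h1α : 0 < 1 - α := by linarith
    have hb' : (n : ℝ) * (1 / α - 1) = n / (α / (1 - α)) := by field_simp
    rwa [← hαp, hc_def, hp_def, div_lt_iff₀ hb0, mul_one_div, ← div_lt_iff₀' (by positivity),
      ← hb']
  have hC : C₁ = (radialMoment (Module.finrank ℝ (EuclideanSpace ℝ (Fin n))) b 0 p)⁻¹ := by
    rw [hC₁, finrank_euclideanSpace_fin, inv_radialMoment_zero, sphereArea]
  have hC₁pos : 0 < C₁ := hC ▸ inv_pos.2 (radialMoment_pos (by simp; omega) hb0 (by simpa)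
    (by simp; linarith))
  have hφ₁' : φ₁ = fun x => C₁ * (1 + ‖x‖ ^ b) ^ (-p) := by
    rw [hφ₁, hp_def, ← neg_sub 1 α, div_neg]
  have hφα := integral_rpow_of_normalized hb0 (by simpa using hw) hαp hC
  have hφb := integral_norm_rpow_mul_of_normalized hb0 (by simpa using hw) hC
  simp only [finrank_euclideanSpace_fin, ← hc_def] at hφα hφb
  have hA' : A = C₁⁻¹ * ((p - 1) / (p - 1 - c)) ^ p * ((p - 1 - c) / c) ^ c := by
    rw [hA, ← hαp, show α * b / (α * b - n * (1 - α)) = α * p / (α * p - c) by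
        rw [hp_def, hc_def]; field_simp,
      show (α * b - n * (1 - α)) / (n * (1 - α)) = (α * p - c) / c by
        rw [hp_def, hc_def]; field_simp]
  rw [hφ₁', hφα, hφb, hA', ← inv_div (p - 1 - c) c, show b / n = c⁻¹ by rw [hc_def, inv_div],
    show (1 - α)⁻¹ = p by rw [hp_def, one_div], show α - 1 = -p⁻¹ by rw [hp_def]; field_simp; ring]
  exact mul_log_rpow_neg_inv_mul_eq (by linarith) (by positivity) hC₁pos
    (div_pos (by linarith) (by linarith)) (div_pos (by linarith) (by positivity))
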